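/- Let R_i, R_j, R_k ∈ SO(3) and unit vectors lᵢ, lⱼ₁, lⱼ₂, lₖ ∈ ℝ³ satisfy the hinge constraints R_i lᵢ = R_j lⱼ₁ and R_j lⱼ₂ = R_k lₖ. Suppose the angular velocities satisfy R_i ω_i = R_j ω_j + a • (R_j lⱼ₁) and R_k ω_k = R_j ω_j + b • (R_j lⱼ₂) for some scalars a, b ∈ ℝ (hinge joint kinematics). Then ⟪R_i ω_i - R_k ω_k, (R_i lᵢ) ×ᵥ (R_k lₖ)⟫ = 0. -/
import Mathlib

open Matrix

def SO3 (R : Matrix (Fin 3) (Fin 3) ℝ) : Prop := Rᵀ * R = 1 ∧ R.det = 1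

noncomputable def norm3 (v : Fin 3 → ℝ) : ℝ := Real.sqrt (v ⬝ᵥ v)

theorem stmt15 (Ri Rj Rk : Matrix (Fin 3) (Fin 3) ℝ)
    (hRi : SO3 Ri) (hRj : SO3 Rj) (hRk : SO3 Rk)
    (li lj1 lj2 lk : Fin 3 → ℝ)
    (hli : norm3 li = 1) (hlj1 : norm3 lj1 = 1) (hlj2 : norm3 lj2 = 1) (hlk : norm3 lk = 1)
    (hc1 : Ri *ᵥ li = Rj *ᵥ lj1) (hc2 : Rj *ᵥ lj2 = Rk *ᵥ lk)
    (ωi ωj ωk : Fin 3 → ℝ) (a b : ℝ)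
    (hki : Ri *ᵥ ωi = Rj *ᵥ ωj + a • (Rj *ᵥ lj1))
    (hkk : Rk *ᵥ ωk = Rj *ᵥ ωj + b • (Rj *ᵥ lj2)) :
    (Ri *ᵥ ωi - Rk *ᵥ ωk) ⬝ᵥ crossProduct (Ri *ᵥ li) (Rk *ᵥ lk) = 0 := by
  rw [hki, hkk, ← hc1, hc2]
  set u := Ri *ᵥ li
  set w := Rk *ᵥ lk
  have : Rj *ᵥ ωj + a • u - (Rj *ᵥ ωj + b • w) = a • u - b • w := by abel
  rw [this]
  simp only [crossProduct, dotProduct, Fin.sum_univ_three]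
  simp [Pi.sub_apply, Pi.smul_apply]
  ring
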